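/- arXiv:1408.3586 — 6 statements merged into one kernel-verified Lean document; each statement's English description precedes it below -/
import Mathlib

section
/- If g ∈ B_{n,m+k} embeds f ∈ B_{n,m}, then μ(f) ≤ 2^k; consequently any embedding of f requires at least ℓ(f) = ⌈log₂ μ(f)⌉ garbage outputs, i.e. k ≥ ℓ(f). -/
/-- `μ(f)`: the number of occurrences of the most frequent output pattern of
`f : 𝔹^n → 𝔹^m`. -/
def mu {n m : ℕ} (f : (Fin n → Bool) → (Fin m → Bool)) : ℕ :=
  Finset.univ.sup fun y : Fin m → Bool =>
    (Finset.univ.filter fun x : Fin n → Bool => f x = y).card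

/-- `ℓ(f) = ⌈log₂ μ(f)⌉`. -/
def ell {n m : ℕ} (f : (Fin n → Bool) → (Fin m → Bool)) : ℕ :=
  Nat.clog 2 (mu f)

/-- `g ∈ B_{n,m+k}` embeds `f ∈ B_{n,m}`: `g` is injective and the first `m`
output components of `g` agree with `f`. -/
def Embeds {n m k : ℕ} (g : (Fin n → Bool) → (Fin (m + k) → Bool))
    (f : (Fin n → Bool) → (Fin m → Bool)) : Prop :=
  Function.Injective g ∧ ∀ (x : Fin n → Bool) (i : Fin m), g x (Fin.castAdd k i) = f x i

/-- If `g ∈ B_{n,m+k}` embeds `f ∈ B_{n,m}`, then `μ(f) ≤ 2^k`; consequently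
any embedding of `f` requires at least `ℓ(f) = ⌈log₂ μ(f)⌉` garbage outputs,
i.e. `k ≥ ℓ(f)`. -/
theorem mu_le_of_embeds
    (n m k : ℕ) (f : (Fin n → Bool) → (Fin m → Bool))
    (g : (Fin n → Bool) → (Fin (m + k) → Bool)) (hg : Embeds g f) :
    mu f ≤ 2 ^ k ∧ k ≥ ell f := by
  have hmu : mu f ≤ 2 ^ k := by
    apply Finset.sup_le
    intro y _
    have h : (Finset.univ.filter fun x : Fin n → Bool => f x = y).card ≤
        (Finset.univ : Finset (Fin k → Bool)).card := by
      apply Finset.card_le_card_of_injOn (fun x j => g x (Fin.natAdd m j))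
        (by simp)
      intro a ha b hb hab
      simp only [Finset.mem_coe, Finset.mem_filter, Finset.mem_univ, true_and] at ha hb
      apply hg.1
      funext i
      refine Fin.addCases (fun i => ?_) (fun j => ?_) i
      · rw [hg.2 a i, hg.2 b i, ha, hb]
      · exact congrFun hab j
    simpa using h
  refine ⟨hmu, ?_⟩
  calc ell f = Nat.clog 2 (mu f) := rfl
    _ ≤ Nat.clog 2 (2 ^ k) := Nat.clog_mono_right _ hmu
    _ = k := Nat.clog_pow 2 k (by norm_num)
end

section
/- Let f ∈ B_{n,m} and let k ≥ 0 satisfy 2^k ≥ μ(f). Then there exists a function g ∈ B_{n,m+k} that embeds f, i.e. g is injective and its first m output components agree with f. In particular, k = ℓ(f) garbage outputs suffice. -/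
/-- The fiber of `f` over `y`. -/
def fiber {n m : ℕ} (f : (Fin n → Bool) → (Fin m → Bool)) (y : Fin m → Bool) :
    Finset (Fin n → Bool) :=
  Finset.univ.filter fun x => f x = y

lemma fiber_card_le_mu {n m : ℕ} (f : (Fin n → Bool) → (Fin m → Bool)) (y : Fin m → Bool) :
    (fiber f y).card ≤ mu f :=
  Finset.le_sup (f := fun y => (Finset.univ.filter fun x => f x = y).card) (Finset.mem_univ y)

lemma mem_fiber {n m : ℕ} (f : (Fin n → Bool) → (Fin m → Bool)) (x : Fin n → Bool) :
    x ∈ fiber f (f x) := by simp [fiber]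

/-- An injective tag of `x` within the fiber over `y`, valued in `Fin k → Bool`. -/
noncomputable def tagOf {n m : ℕ} (k : ℕ) (f : (Fin n → Bool) → (Fin m → Bool))
    (hk : mu f ≤ 2 ^ k) (y : Fin m → Bool) (x : Fin n → Bool) (h : x ∈ fiber f y) :
    Fin k → Bool :=
  (Fintype.equivFinOfCardEq (by simp) : (Fin k → Bool) ≃ Fin (2 ^ k)).symm
    (Fin.castLE (by rw [Fintype.card_coe]; exact le_trans (fiber_card_le_mu f y) hk)
      ((Fintype.equivFin ↥(fiber f y)) ⟨x, h⟩))

lemma tagOf_inj {n m : ℕ} (k : ℕ) (f : (Fin n → Bool) → (Fin m → Bool))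
    (hk : mu f ≤ 2 ^ k) (y : Fin m → Bool) (x1 x2 : Fin n → Bool)
    (h1 : x1 ∈ fiber f y) (h2 : x2 ∈ fiber f y)
    (h : tagOf k f hk y x1 h1 = tagOf k f hk y x2 h2) : x1 = x2 := by
  have h' := (Fintype.equivFinOfCardEq (by simp) :
      (Fin k → Bool) ≃ Fin (2 ^ k)).symm.injective h
  have h'' := Fin.castLE_injective _ h'
  have h''' := (Fintype.equivFin ↥(fiber f y)).injective h''
  exact Subtype.mk.injEq .. ▸ h'''

/-- The tag of `x` (within its own fiber). -/
noncomputable def tag {n m : ℕ} (k : ℕ) (f : (Fin n → Bool) → (Fin m → Bool))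
    (hk : mu f ≤ 2 ^ k) (x : Fin n → Bool) : Fin k → Bool :=
  tagOf k f hk (f x) x (mem_fiber f x)

lemma tag_eq {n m : ℕ} (k : ℕ) (f : (Fin n → Bool) → (Fin m → Bool))
    (hk : mu f ≤ 2 ^ k) (x : Fin n → Bool) (y : Fin m → Bool) (h : f x = y) :
    tag k f hk x = tagOf k f hk y x (h ▸ mem_fiber f x) := by
  subst h; rfl

lemma exists_embed_aux {n m : ℕ} (k : ℕ) (f : (Fin n → Bool) → (Fin m → Bool))
    (hk : mu f ≤ 2 ^ k) :
    ∃ g : (Fin n → Bool) → (Fin (m + k) → Bool), Embeds g f := by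
  refine ⟨fun x => Fin.addCases (f x) (tag k f hk x), ?_, ?_⟩
  · intro x1 x2 hg
    have hf : f x1 = f x2 := by
      funext i
      have := congrFun hg (Fin.castAdd k i)
      simpa using this
    have ht : tag k f hk x1 = tag k f hk x2 := by
      funext i
      have := congrFun hg (Fin.natAdd m i)
      simpa using this
    rw [tag_eq k f hk x1 (f x2) hf, tag_eq k f hk x2 (f x2) rfl] at ht
    exact tagOf_inj k f hk (f x2) x1 x2 _ _ ht
  · intro x i
    simp

/-- Let `f ∈ B_{n,m}` and let `k ≥ 0` satisfy `2^k ≥ μ(f)`. Then there exists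
a function `g ∈ B_{n,m+k}` that embeds `f`, i.e. `g` is injective and its
first `m` output components agree with `f`. In particular, `k = ℓ(f)` garbage
outputs suffice. -/
theorem exists_embedding_of_two_pow_ge_mu
    (n m k : ℕ) (f : (Fin n → Bool) → (Fin m → Bool)) (hk : 2 ^ k ≥ mu f) :
    (∃ g : (Fin n → Bool) → (Fin (m + k) → Bool), Embeds g f) ∧
    (∃ g : (Fin n → Bool) → (Fin (m + ell f) → Bool), Embeds g f) := by
  refine ⟨exists_embed_aux k f hk, exists_embed_aux (ell f) f ?_⟩
  exact Nat.le_pow_clog one_lt_two (mu f)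
end

section
/- For every Boolean function f ∈ B_{n,m}, the minimal k ≥ 0 for which there exists a function g ∈ B_{n,m+k} embedding f equals ℓ(f) = ⌈log₂ μ(f)⌉; that is, ℓ(f) is both an upper and a lower bound for the number of garbage outputs of an embedding of f. -/
/-!
Splitting the outputs of `g` into the `m` outputs of `f` and `k` garbage bits, `g` embeds `f`
exactly when the garbage map is injective on every fibre of `f`. Such a map into `𝔹^k` exists
iff every fibre has at most `2^k` points, i.e. iff `μ(f) ≤ 2^k`, i.e. iff `ℓ(f) ≤ k`.
-/

open Function Finset

section Fibers

variable {α β γ : Type*} [Fintype α] [DecidableEq β] [Fintype γ]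

theorem card_fiber_le_of_injective_prodMk {f : α → β} {g : α → γ}
    (hfg : Injective fun x => (f x, g x)) (y : β) : #{x | f x = y} ≤ Fintype.card γ := by
  refine card_le_card_of_injOn g (fun _ _ => mem_coe.2 (mem_univ _)) fun x hx x' hx' hxx' => ?_
  simp only [coe_filter, mem_univ, true_and, Set.mem_ofPred_eq] at hx hx'
  exact hfg (Prod.ext (hx.trans hx'.symm) hxx')

theorem exists_injective_prodMk_of_card_fiber_le {f : α → β}
    (hf : ∀ y, #{x | f x = y} ≤ Fintype.card γ) : ∃ g : α → γ, Injective fun x => (f x, g x) := by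
  have e : ∀ y, {x // f x = y} ↪ γ := fun y =>
    (Embedding.nonempty_of_card_le ((Fintype.card_subtype _).trans_le (hf y))).some
  -- `x ↦ (f x, e (f x) x)` factors as `α ≃ Σ y, f⁻¹{y} → Σ y, γ ≃ β × γ`.
  have he : Injective (Sigma.map (β₂ := fun _ => γ) id fun y => e y) :=
    injective_id.sigma_map fun y => (e y).injective
  exact ⟨fun x => e (f x) ⟨x, rfl⟩,
    (Equiv.sigmaEquivProd β γ).injective.comp (he.comp (Equiv.sigmaFiberEquiv f).symm.injective)⟩

theorem exists_injective_prodMk_iff_card_fiber_le (f : α → β) :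
    (∃ g : α → γ, Injective fun x => (f x, g x)) ↔ ∀ y, #{x | f x = y} ≤ Fintype.card γ :=
  ⟨fun ⟨_, hfg⟩ => card_fiber_le_of_injective_prodMk hfg, exists_injective_prodMk_of_card_fiber_le⟩

end Fibers

section Embedding

variable {n m : ℕ} (f : (Fin n → Bool) → (Fin m → Bool)) (k : ℕ)

theorem exists_embeds_iff_exists_injective_prodMk :
    (∃ g : (Fin n → Bool) → (Fin (m + k) → Bool), Embeds g f) ↔
      ∃ h : (Fin n → Bool) → (Fin k → Bool), Injective fun x => (f x, h x) := by
  constructor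
  · rintro ⟨g, hg_inj, hg⟩
    refine ⟨fun x i => g x (Fin.natAdd m i), ?_⟩
    have hsplit : (fun x => (f x, fun i => g x (Fin.natAdd m i))) = (Fin.appendEquiv m k).symm ∘ g :=
      funext fun x => Prod.ext (funext fun i => (hg x i).symm) rfl
    rw [hsplit]
    exact (Fin.appendEquiv m k).symm.injective.comp hg_inj
  · rintro ⟨h, hfh⟩
    exact ⟨Fin.appendEquiv m k ∘ fun x => (f x, h x), (Fin.appendEquiv m k).injective.comp hfh,
      fun x i => Fin.append_left _ _ i⟩

theorem ell_le_iff_card_fiber_le : ell f ≤ k ↔ ∀ y, #{x | f x = y} ≤ 2 ^ k := by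
  rw [ell, Nat.clog_le_iff_le_pow one_lt_two, mu, Finset.sup_le_iff]
  simp only [mem_univ, true_implies]

theorem exists_embeds_iff_ell_le :
    (∃ g : (Fin n → Bool) → (Fin (m + k) → Bool), Embeds g f) ↔ ell f ≤ k := by
  rw [exists_embeds_iff_exists_injective_prodMk, exists_injective_prodMk_iff_card_fiber_le,
    ell_le_iff_card_fiber_le]
  simp only [Fintype.card_fun, Fintype.card_bool, Fintype.card_fin]

end Embedding

/-- For every Boolean function `f ∈ B_{n,m}`, the minimal `k ≥ 0` for which
there exists a function `g ∈ B_{n,m+k}` embedding `f` equals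
`ℓ(f) = ⌈log₂ μ(f)⌉`; that is, `ℓ(f)` is both an upper and a lower bound for
the number of garbage outputs of an embedding of `f`. -/
theorem ell_isLeast_embedding
    (n m : ℕ) (f : (Fin n → Bool) → (Fin m → Bool)) :
    IsLeast {k : ℕ | ∃ g : (Fin n → Bool) → (Fin (m + k) → Bool), Embeds g f}
      (ell f) :=
  ⟨(exists_embeds_iff_ell_le f _).2 le_rfl, fun _ hk => (exists_embeds_iff_ell_le f _).1 hk⟩
end

section
/- Let m ≥ 1, let φ ∈ B_j be a propositional function over variables x_1,…,x_j, set n = j + m, and define f_t ∈ B_{n,m} by its components ψ_i(x_1,…,x_{j+m}) = x_{j+i} ∧ φ(x_1,…,x_j) for i = 1,…,m. Then φ is valid (φ(x) = 1 for all x ∈ 𝔹^j) if and only if μ(f_t) = 2^j, equivalently if and only if ℓ(f_t) = j = n − m. -/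
/-- The function `f_t ∈ B_{j+m,m}` with components
`ψ_i(x_1,…,x_{j+m}) = x_{j+i} ∧ φ(x_1,…,x_j)` for `i = 1,…,m`. -/
def ft (j m : ℕ) (φ : (Fin j → Bool) → Bool) :
    (Fin (j + m) → Bool) → (Fin m → Bool) :=
  fun x i => x (Fin.natAdd j i) && φ (fun a => x (Fin.castAdd m a))

/-!
Writing an input as `(a, b) ∈ 𝔹^j × 𝔹^m`, we have `f_t(a, b) = b ∧ φ(a)`. If `φ` is valid,
`f_t` is the projection onto `b`, so every fibre has exactly `2^j` elements. If `φ(a₀) = 0`,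
the fibre over `0` contains `(a, 0)` for every `a` and, since `m ≥ 1`, also `(a₀, b)` for some
`b ≠ 0`, hence has more than `2^j` elements. As `⌈log₂⌉` is strictly monotone across powers of
two, the statement about `ℓ` follows.
-/

open Finset

section Mu

variable {n m : ℕ} (f : (Fin n → Bool) → (Fin m → Bool))

lemma card_fiber_le_mu (y : Fin m → Bool) : #{x | f x = y} ≤ mu f :=
  le_sup (f := fun y => #{x | f x = y}) (mem_univ y)

lemma mu_eq_of_forall_card_fiber_eq {c : ℕ} (h : ∀ y, #{x | f x = y} = c) : mu f = c := by
  rw [mu, sup_congr rfl fun y _ => h y]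
  exact sup_const univ_nonempty c

end Mu

section Ft

variable {j m : ℕ} (φ : (Fin j → Bool) → Bool)

lemma ft_append (a : Fin j → Bool) (b : Fin m → Bool) :
    ft j m φ (Fin.append a b) = fun i => b i && φ a := by
  funext i
  simp only [ft, Fin.append_left, Fin.append_right]

lemma card_fiber_ft (y : Fin m → Bool) :
    #{x | ft j m φ x = y} = ∑ a, #{b : Fin m → Bool | (fun i => b i && φ a) = y} := by
  rw [← card_equiv (Fin.appendEquiv j m) (s := {p | (fun i => p.2 i && φ p.1) = y})
    fun p => by simp only [mem_filter, mem_univ, true_and, ← ft_append]; rfl]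
  simp only [card_filter, Fintype.sum_prod_type]

lemma card_fiber_ft_of_valid (hφ : ∀ a, φ a = true) (y : Fin m → Bool) :
    #{x | ft j m φ x = y} = 2 ^ j := by
  simp [card_fiber_ft, hφ, filter_eq']

lemma two_pow_lt_card_fiber_ft_false (hm : 1 ≤ m) (hφ : ∃ a, φ a = false) :
    2 ^ j < #{x | ft j m φ x = fun _ => false} := by
  obtain ⟨a₀, ha₀⟩ := hφ
  have h_card : 2 ^ j = ∑ _a : Fin j → Bool, 1 := by simp
  rw [card_fiber_ft, h_card]
  refine sum_lt_sum (fun a _ => card_pos.2 ⟨fun _ => false, by simp⟩) ⟨a₀, mem_univ _, ?_⟩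
  simpa [ha₀, Nat.one_lt_two_pow_iff] using Nat.one_le_iff_ne_zero.1 hm

lemma mu_ft_eq_two_pow_of_valid (hφ : ∀ a, φ a = true) : mu (ft j m φ) = 2 ^ j :=
  mu_eq_of_forall_card_fiber_eq _ (card_fiber_ft_of_valid φ hφ)

lemma two_pow_lt_mu_ft (hm : 1 ≤ m) (hφ : ¬ ∀ a, φ a = true) : 2 ^ j < mu (ft j m φ) :=
  (two_pow_lt_card_fiber_ft_false φ hm (by simpa using hφ)).trans_le (card_fiber_le_mu _ _)

end Ft

/-- Let `m ≥ 1`, let `φ ∈ B_j`, set `n = j + m`, and define `f_t ∈ B_{n,m}` by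
`ψ_i(x_1,…,x_{j+m}) = x_{j+i} ∧ φ(x_1,…,x_j)` for `i = 1,…,m`.  Then `φ` is
valid (`φ(x) = 1` for all `x ∈ 𝔹^j`) if and only if `μ(f_t) = 2^j`,
equivalently if and only if `ℓ(f_t) = j = n − m`. -/
theorem valid_iff_mu_eq_two_pow
    (j m : ℕ) (hm : 1 ≤ m) (φ : (Fin j → Bool) → Bool) :
    ((∀ x : Fin j → Bool, φ x = true) ↔ mu (ft j m φ) = 2 ^ j) ∧
    ((∀ x : Fin j → Bool, φ x = true) ↔ ell (ft j m φ) = j) := by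
  have h_lt := two_pow_lt_mu_ft φ hm
  refine ⟨⟨mu_ft_eq_two_pow_of_valid φ, fun h => by_contra fun hφ => (h_lt hφ).ne' h⟩,
    ⟨fun hφ => ?_, fun h => by_contra fun hφ => ?_⟩⟩
  · rw [ell, mu_ft_eq_two_pow_of_valid φ hφ, Nat.clog_pow 2 j one_lt_two]
  · exact (((Nat.lt_clog_iff_pow_lt one_lt_two).2 (h_lt hφ)).ne' h)
end

section
/- Let φ ∈ B_n be a propositional function over variables x_1,…,x_n, and define f = (f_1,…,f_n) ∈ B_{n,n} by f_i(x_1,…,x_n) = x_i ∧ φ(x_1,…,x_n) ∧ φ(0,…,0) for each i ∈ {1,…,n}. Then φ is valid if and only if f is injective (equivalently, if and only if ℓ(f) = 0). -/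
/-- The function `f ∈ B_{n,n}` with components
`f_i(x_1,…,x_n) = x_i ∧ φ(x_1,…,x_n) ∧ φ(0,…,0)`. -/
def redF (n : ℕ) (φ : (Fin n → Bool) → Bool) :
    (Fin n → Bool) → (Fin n → Bool) :=
  fun x i => x i && φ x && φ (fun _ => false)

/-- Let `φ ∈ B_n` be a propositional function over the variables
`x_1,…,x_n` (`n ≥ 1`), and define `f = (f_1,…,f_n) ∈ B_{n,n}` by
`f_i(x_1,…,x_n) = x_i ∧ φ(x_1,…,x_n) ∧ φ(0,…,0)` for each `i ∈ {1,…,n}`.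
Then `φ` is valid if and only if `f` is injective (equivalently, if and only
if `ℓ(f) = 0`). -/
theorem valid_iff_injective
    (n : ℕ) (hn : 1 ≤ n) (φ : (Fin n → Bool) → Bool) :
    ((∀ x : Fin n → Bool, φ x = true) ↔ Function.Injective (redF n φ)) ∧
    ((∀ x : Fin n → Bool, φ x = true) ↔ ell (redF n φ) = 0) := by
  have hinj : (∀ x : Fin n → Bool, φ x = true) ↔ Function.Injective (redF n φ) := by
    constructor
    · intro h a b hab
      have ha : redF n φ a = a := funext fun i => by simp [redF, h]
      have hb : redF n φ b = b := funext fun i => by simp [redF, h]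
      rw [ha, hb] at hab; exact hab
    · intro hinj x
      by_contra hx
      have hx' : φ x = false := by simpa using hx
      have hz : redF n φ x = fun _ => false := funext fun i => by simp [redF, hx']
      by_cases h0 : φ (fun _ => false) = true
      · have hz0 : redF n φ (fun _ => false) = fun _ => false :=
          funext fun i => by simp [redF]
        have hxe : x = fun _ => false := hinj (hz.trans hz0.symm)
        rw [hxe] at hx'
        rw [hx'] at h0
        exact Bool.false_ne_true h0
      · have hfalse : φ (fun _ => false) = false := by simpa using h0
        have h1 : redF n φ (fun _ => true) = fun _ => false :=
          funext fun i => by simp [redF, hfalse]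
        have h2 : redF n φ (fun _ => false) = fun _ => false :=
          funext fun i => by simp [redF, hfalse]
        have he : (fun _ : Fin n => true) = fun _ => false := hinj (h1.trans h2.symm)
        simpa using congrFun he ⟨0, hn⟩
  have hmu : Function.Injective (redF n φ) ↔ ell (redF n φ) = 0 := by
    constructor
    · intro hf
      have hle : mu (redF n φ) ≤ 1 := by
        apply Finset.sup_le
        intro y _
        apply Finset.card_le_one.mpr
        intro a ha b hb
        simp only [Finset.mem_filter] at ha hb
        exact hf (ha.2.trans hb.2.symm)
      unfold ell
      exact Nat.clog_of_right_le_one hle 2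
    · intro he a b hab
      have h2 : mu (redF n φ) ≤ 1 := by
        by_contra h
        push_neg at h
        have := Nat.clog_pos (by norm_num : 1 < 2) h
        unfold ell at he; omega
      have hcard : (Finset.univ.filter fun x : Fin n → Bool =>
          redF n φ x = redF n φ a).card ≤ 1 := by
        calc (Finset.univ.filter fun x : Fin n → Bool => redF n φ x = redF n φ a).card
            ≤ mu (redF n φ) := Finset.le_sup (f := fun y => (Finset.univ.filter fun x : Fin n → Bool => redF n φ x = y).card) (Finset.mem_univ (redF n φ a))
          _ ≤ 1 := h2
      have ha : a ∈ Finset.univ.filter fun x : Fin n → Bool =>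
          redF n φ x = redF n φ a := by simp
      have hb : b ∈ Finset.univ.filter fun x : Fin n → Bool =>
          redF n φ x = redF n φ a := by simp [hab]
      exact Finset.card_le_one.mp hcard a ha b hb
  exact ⟨hinj, hinj.trans hmu⟩
end

section
/- Let f = (f_1,…,f_m) ∈ B_{n,m} have a PLA representation P : C → 𝒫({1,…,m}) whose cubes are pairwise disjoint (a DSOP). Then for every nonempty S ⊆ {1,…,m}, the number of inputs x with f(x) equal to the characteristic vector of S is Σ_{c ∈ C, P(c) = S} #on(c), and the number of inputs with f(x) = 0^m is 2^n − Σ_{c ∈ C} #on(c); consequently μ(f) equals the maximum of 2^n − Σ_{c ∈ C} #on(c) and max over nonempty S of Σ_{c ∈ C, P(c) = S} #on(c), i.e. Algorithm H computes μ(f) exactly on DSOP representations. -/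
/-- Let `f = (f_1,…,f_m) ∈ B_{n,m}` have a PLA representation
`P : C → 𝒫({1,…,m})` (with nonempty output sets, as each cube of a PLA
representation constructs at least one output function) whose cubes are
pairwise disjoint (a DSOP).  Then for every nonempty `S ⊆ {1,…,m}`, the
number of inputs `x` with `f(x)` equal to the characteristic vector of `S` is
`Σ_{c ∈ C, P(c) = S} #on(c)`, and the number of inputs with `f(x) = 0^m` is
`2^n − Σ_{c ∈ C} #on(c)`; consequently `μ(f)` equals the maximum of
`2^n − Σ_{c ∈ C} #on(c)` and `max_{S ≠ ∅} Σ_{c ∈ C, P(c) = S} #on(c)`,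
i.e. Algorithm H computes `μ(f)` exactly on DSOP representations. -/
theorem algorithmH_exact_on_dsop
    (n m : ℕ) (ι : Type) [Fintype ι] [DecidableEq ι]
    (c : ι → (Fin n → Bool) → Bool) (P : ι → Finset (Fin m))
    (f : (Fin n → Bool) → (Fin m → Bool))
    (hrep : ∀ (x : Fin n → Bool) (i : Fin m),
      f x i = true ↔ ∃ a : ι, i ∈ P a ∧ c a x = true)
    (hdisj : ∀ a b : ι, a ≠ b →
      ∀ x : Fin n → Bool, ¬(c a x = true ∧ c b x = true))
    (hP : ∀ a : ι, (P a).Nonempty) :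
    (∀ S : Finset (Fin m), S.Nonempty →
      (Finset.univ.filter fun x : Fin n → Bool =>
          f x = fun i => decide (i ∈ S)).card
        = ∑ a ∈ Finset.univ.filter (fun a : ι => P a = S),
            (Finset.univ.filter fun x : Fin n → Bool => c a x = true).card) ∧
    ((Finset.univ.filter fun x : Fin n → Bool =>
          f x = fun _ => false).card
        = 2 ^ n - ∑ a : ι,
            (Finset.univ.filter fun x : Fin n → Bool => c a x = true).card) ∧
    (mu f = max
      (2 ^ n - ∑ a : ι,
        (Finset.univ.filter fun x : Fin n → Bool => c a x = true).card)
      ((Finset.univ.filter fun S : Finset (Fin m) => S.Nonempty).sup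
        fun S => ∑ a ∈ Finset.univ.filter (fun a : ι => P a = S),
          (Finset.univ.filter fun x : Fin n → Bool => c a x = true).card)) := by
 -- proof
  classical
  -- if x is in cube a, f x is the characteristic vector of P a
  have hkey : ∀ (x : Fin n → Bool) (a : ι), c a x = true →
      f x = fun i => decide (i ∈ P a) := by
    intro x a ha
    funext i
    rcases Bool.eq_false_or_eq_true (f x i) with h | h
    · rw [h]
      symm
      simp only [decide_eq_true_eq]
      rcases (hrep x i).1 h with ⟨b, hb, hcb⟩
      by_cases hab : a = b
      · exact hab ▸ hb
      · exact absurd ⟨ha, hcb⟩ (hdisj a b hab x)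
    · rw [h]
      symm
      simp only [decide_eq_false_iff_not]
      intro hi
      have : f x i = true := (hrep x i).2 ⟨a, hi, ha⟩
      simp [this] at h
  have hzero : ∀ x : Fin n → Bool, (∀ a : ι, ¬ c a x = true) →
      f x = fun _ => false := by
    intro x hx
    funext i
    rcases Bool.eq_false_or_eq_true (f x i) with h | h
    · rcases (hrep x i).1 h with ⟨b, hb, hcb⟩
      exact absurd hcb (hx b)
    · exact h
  -- characteristic vectors are injective / determine the set
  have hchar : ∀ S T : Finset (Fin m),
      ((fun i => decide (i ∈ S)) = fun i => decide (i ∈ T)) → S = T := by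
    intro S T h
    ext i
    have := congrFun h i
    simpa using this
  set cnt : ι → ℕ := fun a =>
    (Finset.univ.filter fun x : Fin n → Bool => c a x = true).card with hcnt
  -- Part 1
  have part1 : ∀ S : Finset (Fin m), S.Nonempty →
      (Finset.univ.filter fun x : Fin n → Bool =>
          f x = fun i => decide (i ∈ S)).card
        = ∑ a ∈ Finset.univ.filter (fun a : ι => P a = S), cnt a := by
    intro S hS
    have hset : (Finset.univ.filter fun x : Fin n → Bool =>
        f x = fun i => decide (i ∈ S))
        = (Finset.univ.filter (fun a : ι => P a = S)).biUnion
            (fun a => Finset.univ.filter fun x : Fin n → Bool => c a x = true) := by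
      ext x
      simp only [Finset.mem_biUnion, Finset.mem_filter, Finset.mem_univ, true_and]
      constructor
      · intro hx
        obtain ⟨i, hi⟩ := hS
        have : f x i = true := by rw [hx]; simpa using hi
        rcases (hrep x i).1 this with ⟨a, _, hca⟩
        refine ⟨a, ?_, hca⟩
        exact hchar _ _ ((hkey x a hca).symm.trans hx)
      · rintro ⟨a, hPa, hca⟩
        rw [hkey x a hca, hPa]
    rw [hset]
    apply Finset.card_biUnion
    intro a _ b _ hab
    simp only [Finset.disjoint_left, Finset.mem_filter, Finset.mem_univ, true_and]
    intro x hx hx'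
    exact hdisj a b hab x ⟨hx, hx'⟩
  -- Part 2
  have hunion : (Finset.univ.filter fun x : Fin n → Bool =>
      ∃ a : ι, c a x = true)
      = Finset.univ.biUnion
          (fun a : ι => Finset.univ.filter fun x : Fin n → Bool => c a x = true) := by
    ext x
    simp
  have hcardunion : (Finset.univ.filter fun x : Fin n → Bool =>
      ∃ a : ι, c a x = true).card = ∑ a : ι, cnt a := by
    rw [hunion]
    apply Finset.card_biUnion
    intro a _ b hb hab
    simp only [Finset.disjoint_left, Finset.mem_filter, Finset.mem_univ, true_and]
    intro x hx hx'
    exact hdisj a b hab x ⟨hx, hx'⟩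
  have hzeroset : (Finset.univ.filter fun x : Fin n → Bool =>
        f x = fun _ => false)
      = Finset.univ.filter fun x : Fin n → Bool =>
          ¬ ∃ a : ι, c a x = true := by
    ext x
    simp only [Finset.mem_filter, Finset.mem_univ, true_and]
    constructor
    · rintro hx ⟨a, ha⟩
      obtain ⟨i, hi⟩ := hP a
      have : f x i = true := (hrep x i).2 ⟨a, hi, ha⟩
      rw [hx] at this
      simp at this
    · intro hx
      exact hzero x (fun a ha => hx ⟨a, ha⟩)
  have part2 : (Finset.univ.filter fun x : Fin n → Bool =>
        f x = fun _ => false).card = 2 ^ n - ∑ a : ι, cnt a := by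
    rw [hzeroset, Finset.filter_not, Finset.card_sdiff_of_subset (Finset.filter_subset _ _),
      hcardunion]
    congr 1
    simp [Finset.card_univ]
  refine ⟨part1, part2, ?_⟩
  -- Part 3
  set N : (Fin m → Bool) → ℕ := fun y =>
    (Finset.univ.filter fun x : Fin n → Bool => f x = y).card with hN
  set R : ℕ := max (2 ^ n - ∑ a : ι, cnt a)
      ((Finset.univ.filter fun S : Finset (Fin m) => S.Nonempty).sup
        fun S => ∑ a ∈ Finset.univ.filter (fun a : ι => P a = S), cnt a) with hR
  show Finset.univ.sup N = R
  apply le_antisymm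
  · apply Finset.sup_le
    intro y _
    by_cases hy : ∃ i : Fin m, y i = true
    · obtain ⟨i, hi⟩ := hy
      set S : Finset (Fin m) := Finset.univ.filter (fun i => y i = true) with hSdef
      have hSne : S.Nonempty := ⟨i, by simp [hSdef, hi]⟩
      have hyS : y = fun i => decide (i ∈ S) := by
        funext j
        have hmem : j ∈ S ↔ y j = true := by simp [hSdef]
        rcases Bool.eq_false_or_eq_true (y j) with h | h <;>
          simp [hmem, h]
      have : N y = ∑ a ∈ Finset.univ.filter (fun a : ι => P a = S), cnt a := by
        have h2 : N y = N (fun i => decide (i ∈ S)) := by rw [hyS]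
        rw [h2]
        exact part1 S hSne
      rw [this, hR]
      exact le_max_of_le_right (Finset.le_sup (f := fun S => ∑ a ∈ Finset.univ.filter (fun a : ι => P a = S), cnt a) (Finset.mem_filter.2 ⟨Finset.mem_univ S, hSne⟩))
    · push_neg at hy
      have hy0 : y = fun _ => false := by
        funext j
        rcases Bool.eq_false_or_eq_true (y j) with h | h
        · exact absurd h (by simpa using hy j)
        · exact h
      have : N y = 2 ^ n - ∑ a : ι, cnt a := by
        have h2 : N y = N (fun _ => false) := by rw [hy0]
        rw [h2]
        exact part2
      rw [this, hR]
      exact le_max_left _ _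
  · rw [hR]
    apply max_le
    · rw [← part2]
      exact Finset.le_sup (f := N) (Finset.mem_univ (fun _ => false))
    · apply Finset.sup_le
      intro S hS
      simp only [Finset.mem_filter, Finset.mem_univ, true_and] at hS
      rw [← part1 S hS]
      exact Finset.le_sup (f := N) (Finset.mem_univ (fun i => decide (i ∈ S)))
end
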